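/- In a simply-laced triangle-free Coxeter system, let α be a link of rank r ≥ 2. Then for each 1 ≤ i ≤ r−1, the intersection of supp_{⟦2i⟧}([α]) and supp_{⟦2i+2⟧}([α]) has exactly one element; that is, the supports of the centers of two consecutive overlapping braid shadows of a link intersect in a single generator. -/

import Mathlib

/-!
Braid moves in the class of a link `α` happen only at the even positions `0, 2, …, 2r - 2`. Seen
through the window of positions `2j+1, 2j+2, 2j+3`, such a move either does nothing or swaps two
adjacent letters `x, y` with `m(x, y) = 3`. Starting from a word reading `s t s u` at positions
`2j, …, 2j+3` (where `t ≠ u`, as there is no shadow at `2j+1`, and `s ≠ u` by reducedness), triangle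
freeness leaves only the windows `t s u`, `s t u`, and `t u s` or `s u t` according as `u` is joined
to `s` or to `t`. Since the shadows at `2j` and `2j+2` each put two distinct letters at their
center, the two supports are `{t, s}` and `{u, c}` with `c` the neighbour of `u`, meeting in `c`.
-/

open List

namespace BraidFormal

variable {B : Type*}

/-- A single braid move: replace a factor `s t s` with `t s t` where `m(s,t) = 3`. -/
def IsBraidMove (M : CoxeterMatrix B) (w w' : List B) : Prop :=
  ∃ (u v : List B) (s t : B), M s t = 3 ∧
    w = u ++ [s, t, s] ++ v ∧ w' = u ++ [t, s, t] ++ v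

/-- Braid equivalence: the reflexive-transitive closure of braid moves. -/
def BraidEquiv (M : CoxeterMatrix B) : List B → List B → Prop :=
  Relation.ReflTransGen (IsBraidMove M)

/-- The braid class of a word. -/
def BraidClass (M : CoxeterMatrix B) (α : List B) : Set (List B) :=
  {β | BraidEquiv M α β}

/-- `w` has a braid shadow at (0-based) positions `i, i+1, i+2`:
the letters there are `s, t, s` with `m(s,t) = 3`.
(This corresponds to the 1-based interval `⟦i+1, i+3⟧` of the paper.) -/
def HasShadowAt (M : CoxeterMatrix B) (w : List B) (i : ℕ) : Prop :=
  ∃ s t : B, M s t = 3 ∧ w[i]? = some s ∧ w[i+1]? = some t ∧ w[i+2]? = some s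

/-- The braid class of `α` has a braid shadow at position `i`. -/
def ClassHasShadowAt (M : CoxeterMatrix B) (α : List B) (i : ℕ) : Prop :=
  ∃ β ∈ BraidClass M α, HasShadowAt M β i

/-- The rank of a reduced expression: the number of braid shadows of its braid class. -/
noncomputable def rank (M : CoxeterMatrix B) (α : List B) : ℕ :=
  Set.ncard {i | ClassHasShadowAt M α i}

/-- A Coxeter matrix is simply laced if all entries are at most 3. -/
def SimplyLaced (M : CoxeterMatrix B) : Prop := ∀ s t : B, M s t ≤ 3

/-- A Coxeter matrix is triangle free if its Coxeter graph has no three-cycles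
(all of whose edges are labelled 3). -/
def TriangleFree (M : CoxeterMatrix B) : Prop :=
  ∀ s t u : B, s ≠ t → t ≠ u → s ≠ u → M s t = 3 → M t u = 3 → M s u ≠ 3

/-- The set of generators appearing in (0-based) position `k` of some word in the
braid class of `α`. -/
def classSupp (M : CoxeterMatrix B) (α : List B) (k : ℕ) : Set B :=
  {s | ∃ β ∈ BraidClass M α, β[k]? = some s}

/-- The set of generators appearing in (0-based) positions `i` through `j` of `w`. -/
def suppInterval (w : List B) (i j : ℕ) : Set B :=
  {s | ∃ k, i ≤ k ∧ k ≤ j ∧ w[k]? = some s}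

variable {W : Type*} [Group W] {M : CoxeterMatrix B}

/-- `α` is a link of rank `r`: a reduced expression of length `2r+1` whose braid class
has braid shadows exactly at the (0-based) positions `0, 2, 4, …, 2r-2`
(the 1-based intervals `⟦1,3⟧, ⟦3,5⟧, …, ⟦2r-1,2r+1⟧`). -/
def IsLink (cs : CoxeterSystem M W) (α : List B) (r : ℕ) : Prop :=
  cs.IsReduced α ∧ α.length = 2 * r + 1 ∧
    ∀ i : ℕ, ClassHasShadowAt M α i ↔ ∃ j < r, i = 2 * j

/-- A Fibonacci link: a link all of whose braid-class braid shadows are braid shadows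
of the link itself. -/
def IsFibLink (cs : CoxeterSystem M W) (φ : List B) (r : ℕ) : Prop :=
  IsLink cs φ r ∧ ∀ i : ℕ, ClassHasShadowAt M φ i → HasShadowAt M φ i

theorem ne_of_coxeterMatrix_eq_three {s t : B} (h : M s t = 3) : s ≠ t := by
  rintro rfl
  simp at h

theorem IsBraidMove.symm {w w' : List B} : IsBraidMove M w w' → IsBraidMove M w' w
  | ⟨u, v, s, t, h, hw, hw'⟩ => ⟨u, v, t, s, M.symmetric s t ▸ h, hw', hw⟩

instance : Std.Symm (IsBraidMove M) := ⟨fun _ _ => IsBraidMove.symm⟩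

theorem BraidEquiv.symm {w w' : List B} (h : BraidEquiv M w w') : BraidEquiv M w' w :=
  Std.Symm.symm (r := Relation.ReflTransGen (IsBraidMove M)) _ _ h

theorem braidEquiv_of_mem_braidClass {α β γ : List B} (hβ : β ∈ BraidClass M α)
    (hγ : γ ∈ BraidClass M α) : BraidEquiv M β γ :=
  hβ.symm.trans hγ

theorem mem_braidClass_of_isBraidMove {α β γ : List B} (hβ : β ∈ BraidClass M α)
    (h : IsBraidMove M β γ) : γ ∈ BraidClass M α :=
  hβ.tail h

theorem IsBraidMove.length_eq {w w' : List B} : IsBraidMove M w w' → w'.length = w.length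
  | ⟨_, _, _, _, _, hw, hw'⟩ => by simp [hw, hw']

theorem BraidEquiv.length_eq {w w' : List B} (h : BraidEquiv M w w') : w'.length = w.length := by
  induction h with
  | refl => rfl
  | tail _ hm ih => rw [hm.length_eq, ih]

theorem IsBraidMove.wordProd_eq (cs : CoxeterSystem M W) {w w' : List B} :
    IsBraidMove M w w' → cs.wordProd w' = cs.wordProd w
  | ⟨u, v, s, t, h, hw, hw'⟩ => by
    have hbraid := cs.wordProd_braidWord_eq s t
    rw [CoxeterSystem.braidWord, CoxeterSystem.braidWord, M.symmetric t s, h] at hbraid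
    simp only [CoxeterSystem.alternatingWord, List.concat_eq_append, List.nil_append,
      List.cons_append] at hbraid
    rw [hw, hw', cs.wordProd_append, cs.wordProd_append, hbraid, ← cs.wordProd_append,
      ← cs.wordProd_append]

theorem BraidEquiv.isReduced {cs : CoxeterSystem M W} {w w' : List B} (h : BraidEquiv M w w')
    (hw : cs.IsReduced w) : cs.IsReduced w' := by
  induction h with
  | refl => exact hw
  | tail _ hm ih => rwa [CoxeterSystem.IsReduced, hm.wordProd_eq, hm.length_eq]

theorem CoxeterSystem.IsReduced.getElem?_succ_ne {cs : CoxeterSystem M W} {w : List B}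
    (hw : cs.IsReduced w) {k : ℕ} {x : B} (hk : w[k]? = some x) : w[k + 1]? ≠ some x := by
  intro hk'
  have hxx : (w.drop k).take 2 = CoxeterSystem.alternatingWord x x 2 := by
    ext i
    rcases i with _ | _ | i <;> simp [hk, hk', CoxeterSystem.alternatingWord]
  exact cs.not_isReduced_alternatingWord x x (by simp) (by simp) (hxx ▸ (hw.drop k).take 2)

theorem eq_take_append_triple_append_drop {w : List B} {p : ℕ} {x y z : B}
    (hx : w[p]? = some x) (hy : w[p + 1]? = some y) (hz : w[p + 2]? = some z) :
    w = w.take p ++ [x, y, z] ++ w.drop (p + 3) := by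
  obtain ⟨hp, rfl⟩ := List.getElem?_eq_some_iff.1 hz
  obtain ⟨-, rfl⟩ := List.getElem?_eq_some_iff.1 hy
  obtain ⟨-, rfl⟩ := List.getElem?_eq_some_iff.1 hx
  rw [List.append_assoc, List.cons_append, List.cons_append, List.cons_append, List.nil_append,
    List.getElem_cons_drop, List.getElem_cons_drop, List.getElem_cons_drop, List.take_append_drop]

theorem exists_isBraidMove_getElem?_succ {w : List B} {p : ℕ} {x y : B} (hxy : M x y = 3)
    (hx : w[p]? = some x) (hy : w[p + 1]? = some y) (hx' : w[p + 2]? = some x) :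
    ∃ w', IsBraidMove M w w' ∧ w'[p + 1]? = some x := by
  have hp : p < w.length := (List.getElem?_eq_some_iff.1 hx).1
  refine ⟨w.take p ++ [y, x, y] ++ w.drop (p + 3), ⟨w.take p, w.drop (p + 3), x, y, hxy,
    eq_take_append_triple_append_drop hx hy hx', rfl⟩, ?_⟩
  grind

theorem ClassHasShadowAt.exists_ne_mem_classSupp {α : List B} {p : ℕ}
    (h : ClassHasShadowAt M α p) :
    ∃ x y, x ≠ y ∧ x ∈ classSupp M α (p + 1) ∧ y ∈ classSupp M α (p + 1) := by
  obtain ⟨β, hβ, x, y, hxy, hx, hy, hx'⟩ := h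
  obtain ⟨β', hmove, hβ'⟩ := exists_isBraidMove_getElem?_succ hxy hx hy hx'
  exact ⟨x, y, ne_of_coxeterMatrix_eq_three hxy,
    ⟨β', mem_braidClass_of_isBraidMove hβ hmove, hβ'⟩, ⟨β, hβ, hy⟩⟩

theorem classSupp_eq_pair {α : List B} {p : ℕ} {a b : B}
    (hsub : ∀ β ∈ BraidClass M α, β[p + 1]? = some a ∨ β[p + 1]? = some b)
    (h : ClassHasShadowAt M α p) : classSupp M α (p + 1) = {a, b} := by
  have hsub' : classSupp M α (p + 1) ⊆ {a, b} := by
    rintro z ⟨β, hβ, hz⟩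
    rcases hsub β hβ with h | h <;> simp_all
  obtain ⟨x, y, hxy, hx, hy⟩ := h.exists_ne_mem_classSupp
  have hx' := hsub' hx
  have hy' := hsub' hy
  refine hsub'.antisymm ?_
  grind

def window (w : List B) (k : ℕ) : Option B × Option B × Option B := (w[k]?, w[k + 1]?, w[k + 2]?)

inductive AdjSwap (M : CoxeterMatrix B) :
    Option B × Option B × Option B → Option B × Option B × Option B → Prop
  | left {x y : B} (c : Option B) : M x y = 3 → AdjSwap M (some x, some y, c) (some y, some x, c)
  | right {x y : B} (a : Option B) : M x y = 3 → AdjSwap M (a, some x, some y) (a, some y, some x)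

/-- A move at an even position meets a window at an odd position in none or two of its places. -/
theorem IsBraidMove.window_eq_or_adjSwap {w w' : List B} (h : IsBraidMove M w w')
    (heven : ∀ p, HasShadowAt M w p → Even p) {k : ℕ} (hk : Odd k) :
    window w' k = window w k ∨ AdjSwap M (window w k) (window w' k) := by
  obtain ⟨u, v, x, y, hxy, rfl, rfl⟩ := h
  have hu : Even u.length := heven _ ⟨x, y, hxy, by simp, by simp, by simp⟩
  obtain hfar | hk | hk :
      (k + 2 < u.length ∨ u.length + 2 < k) ∨ k + 1 = u.length ∨ k = u.length + 1 := by
    rcases hu with ⟨m, hm⟩; rcases hk with ⟨l, hl⟩; omega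
  · left
    simp only [window, Prod.mk.injEq]
    grind
  · right
    have hwin : ∀ a b : B, window (u ++ [a, b, a] ++ v) k = (u[k]?, some a, some b) := by
      intro a b
      simp only [window, Prod.mk.injEq]
      grind
    rw [hwin, hwin]
    exact .right _ hxy
  · right
    have hwin : ∀ a b : B, window (u ++ [a, b, a] ++ v) k = (some b, some a, v[0]?) := by
      intro a b
      simp only [window, Prod.mk.injEq]
      grind
    rw [hwin, hwin]
    exact .left _ (M.symmetric x y ▸ hxy)

/-- Windows containing `t s u` and closed under `AdjSwap` when `m(s, t) = 3` and `M` is triangle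
free. -/
def IsLinkWindow (M : CoxeterMatrix B) (s t u : B) (q : Option B × Option B × Option B) :
    Prop :=
  q = (some t, some s, some u) ∨ q = (some s, some t, some u) ∨
    (M s u = 3 ∧ q = (some t, some u, some s)) ∨ (M t u = 3 ∧ q = (some s, some u, some t))

section LinkWindow

variable {s t u : B} {q : Option B × Option B × Option B}

theorem IsLinkWindow.fst_eq (h : IsLinkWindow M s t u q) : q.1 = some t ∨ q.1 = some s := by
  rcases h with rfl | rfl | ⟨-, rfl⟩ | ⟨-, rfl⟩ <;> simp

variable (htf : TriangleFree M) (hst : M s t = 3) (htu : t ≠ u) (hsu : s ≠ u)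
include htf hst htu hsu

/-- The two swaps that would leave the list need `s`, `t`, `u` to form a triangle. -/
theorem IsLinkWindow.of_adjSwap {q' : Option B × Option B × Option B}
    (hq : IsLinkWindow M s t u q) (h : AdjSwap M q q') : IsLinkWindow M s t u q' := by
  have htri := htf s t u (ne_of_coxeterMatrix_eq_three hst) htu hsu hst
  rcases h with ⟨c, hxy⟩ | ⟨a, hxy⟩ <;>
    rcases hq with h | h | ⟨hsu3, h⟩ | ⟨htu3, h⟩ <;>
    simp only [Prod.mk.injEq, Option.some.injEq] at h <;>
    obtain ⟨rfl, rfl, rfl⟩ := h <;>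
    simp_all [IsLinkWindow, M.symmetric]

theorem IsLinkWindow.snd_snd_eq (h : IsLinkWindow M s t u q) :
    q.2.2 = some u ∨ q.2.2 = some (if M s u = 3 then s else t) := by
  have htri := htf s t u (ne_of_coxeterMatrix_eq_three hst) htu hsu hst
  rcases h with rfl | rfl | ⟨hsu3, rfl⟩ | ⟨htu3, rfl⟩ <;> simp_all

end LinkWindow

section Link

variable {cs : CoxeterSystem M W} {α : List B} {r : ℕ}

theorem IsLink.classHasShadowAt (hα : IsLink cs α r) {j : ℕ} (hj : j < r) :
    ClassHasShadowAt M α (2 * j) :=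
  (hα.2.2 _).2 ⟨j, hj, rfl⟩

theorem IsLink.even_of_hasShadowAt (hα : IsLink cs α r) {β : List B} (hβ : β ∈ BraidClass M α)
    {p : ℕ} (h : HasShadowAt M β p) : Even p := by
  obtain ⟨j, -, rfl⟩ := (hα.2.2 p).1 ⟨β, hβ, h⟩
  exact even_two_mul j

theorem IsLink.exists_window_eq (hα : IsLink cs α r) {j : ℕ} (hj : j + 2 ≤ r) :
    ∃ β₀ ∈ BraidClass M α, ∃ s t u : B, M s t = 3 ∧ t ≠ u ∧ s ≠ u ∧
      window β₀ (2 * j + 1) = (some t, some s, some u) := by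
  obtain ⟨β₀, hβ₀, s, t, hst, -, h₁, h₂⟩ := hα.classHasShadowAt (j := j) (by omega)
  obtain ⟨u, h₃⟩ : ∃ u, β₀[2 * j + 3]? = some u :=
    ⟨_, List.getElem?_eq_getElem (by rw [BraidEquiv.length_eq hβ₀, hα.2.1]; omega)⟩
  refine ⟨β₀, hβ₀, s, t, u, hst, ?_, ?_, by simp [window, h₁, h₂, h₃]⟩
  · rintro rfl
    exact Nat.not_even_two_mul_add_one j <|
      hα.even_of_hasShadowAt hβ₀ ⟨t, s, M.symmetric s t ▸ hst, h₁, h₂, h₃⟩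
  · rintro rfl
    exact CoxeterSystem.IsReduced.getElem?_succ_ne (BraidEquiv.isReduced hβ₀ hα.1) h₂ h₃

theorem IsLink.isLinkWindow (hα : IsLink cs α r) (htf : TriangleFree M) {k : ℕ} (hk : Odd k)
    {β₀ : List B} (hβ₀ : β₀ ∈ BraidClass M α) {s t u : B}
    (h₀ : window β₀ k = (some t, some s, some u)) (hst : M s t = 3) (htu : t ≠ u) (hsu : s ≠ u)
    {β : List B} (hβ : β ∈ BraidClass M α) : IsLinkWindow M s t u (window β k) := by
  induction braidEquiv_of_mem_braidClass hβ₀ hβ with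
  | refl => exact Or.inl h₀
  | tail hγ hmove ih =>
    rcases hmove.window_eq_or_adjSwap
      (fun _ => hα.even_of_hasShadowAt (hβ₀.trans hγ)) hk with heq | hswap
    · exact heq ▸ ih (hβ₀.trans hγ)
    · exact (ih (hβ₀.trans hγ)).of_adjSwap htf hst htu hsu hswap

end Link

/-- Here `j + 1` is the paper's `i`: the centers at the 1-based positions `2i` and `2i+2` are the
0-based positions `2j+1` and `2j+3`. -/
theorem statement_2_general {B W : Type*} [Group W] {M : CoxeterMatrix B}
    (cs : CoxeterSystem M W) (htf : TriangleFree M)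
    (α : List B) (r : ℕ) (hlink : IsLink cs α r)
    (j : ℕ) (hj : j + 2 ≤ r) :
    (classSupp M α (2 * j + 1) ∩ classSupp M α (2 * j + 3)).ncard = 1 := by
  obtain ⟨β₀, hβ₀, s, t, u, hst, htu, hsu, h₀⟩ := hlink.exists_window_eq hj
  have hwin : ∀ β ∈ BraidClass M α, IsLinkWindow M s t u (window β (2 * j + 1)) :=
    fun β hβ => hlink.isLinkWindow htf (odd_two_mul_add_one j) hβ₀ h₀ hst htu hsu hβ
  have hA : classSupp M α (2 * j + 1) = {t, s} :=
    classSupp_eq_pair (fun β hβ => (hwin β hβ).fst_eq) (hlink.classHasShadowAt (by omega))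
  have hC : classSupp M α (2 * j + 3) = {u, if M s u = 3 then s else t} :=
    classSupp_eq_pair (fun β hβ => (hwin β hβ).snd_snd_eq htf hst htu hsu)
      (hlink.classHasShadowAt (j := j + 1) (by omega))
  rw [hA, hC, Set.inter_insert_of_notMem (by simp [htu.symm, hsu.symm]),
    Set.inter_singleton_of_mem (by split_ifs <;> simp), Set.ncard_singleton]

/-- the supports of the centers of two consecutive overlapping braid
shadows of a link intersect in a single generator. (Here `j + 1` plays the role of
the index `i` of the paper, `1 ≤ i ≤ r - 1`; the centers are the 1-based positions
`2i` and `2i+2`, i.e. the 0-based positions `2j+1` and `2j+3`.) -/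
theorem statement_2 {B W : Type*} [Group W] {M : CoxeterMatrix B}
    (cs : CoxeterSystem M W) (hsl : SimplyLaced M) (htf : TriangleFree M)
    (α : List B) (r : ℕ) (hlink : IsLink cs α r) (hr : 2 ≤ r)
    (j : ℕ) (hj : j + 2 ≤ r) :
    (classSupp M α (2 * j + 1) ∩ classSupp M α (2 * j + 3)).ncard = 1 :=
  statement_2_general cs htf α r hlink j hj

end BraidFormal
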